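/- arXiv:1602.05604 — 2 statements merged into one kernel-verified Lean document; each statement's English description precedes it below -/
import Mathlib

section
/- For every integer k ≥ 1 and all real N_E, N_I, the k-th partial derivative of I2 with respect to N_E exists and equals (−1)^k·(b_EI/√a_I)^k · ∫₀^∞ e^{−s²/2}·s^{k−1}·(e^{s·w̃_F} − e^{s·w̃_R}) ds. -/
open MeasureTheory

/-- The stationary firing-rate functional `I2` of the inhibitory population. -/
noncomputable def I2 (VR VF aI bEE bEI bII νext : ℝ) (NE NI : ℝ) : ℝ :=
  ∫ s in Set.Ioi (0:ℝ),
    Real.exp (-s ^ 2 / 2) / s *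
      (Real.exp (s * ((VF - (bEI * NE - bII * NI + (bEI - bEE) * νext)) / Real.sqrt aI)) -
       Real.exp (s * ((VR - (bEI * NE - bII * NI + (bEI - bEE) * νext)) / Real.sqrt aI)))

open MeasureTheory Set

namespace I2Aux

/-- The general parametric family. -/
noncomputable def G (α β c : ℝ) (n : ℕ) (x : ℝ) : ℝ :=
  ∫ s in Set.Ioi (0:ℝ),
    Real.exp (-s ^ 2 / 2) * s ^ n / s *
      (Real.exp (s * (α - c * x)) - Real.exp (s * (β - c * x)))

lemma exp_sub_exp_le {a b : ℝ} (_h : b ≤ a) :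
    Real.exp a - Real.exp b ≤ (a - b) * Real.exp a := by
  have h1 : (b - a) + 1 ≤ Real.exp (b - a) := Real.add_one_le_exp _
  have h2 : ((b - a) + 1) * Real.exp a ≤ Real.exp (b - a) * Real.exp a :=
    mul_le_mul_of_nonneg_right h1 (Real.exp_pos a).le
  rw [← Real.exp_add, sub_add_cancel] at h2
  linarith

lemma gauss_integrable (n : ℕ) (K : ℝ) :
    IntegrableOn (fun s : ℝ => s ^ n * Real.exp (-s ^ 2 / 2) * Real.exp (s * K))
      (Set.Ioi 0) := by
  have base : IntegrableOn (fun s : ℝ => s ^ n * Real.exp (-(1/4) * s ^ 2)) (Set.Ioi 0) := by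
    have := integrableOn_rpow_mul_exp_neg_mul_sq (b := 1/4) (by norm_num) (s := (n : ℝ))
      (lt_of_lt_of_le (by norm_num) (Nat.cast_nonneg n))
    simpa [Real.rpow_natCast] using this
  have base2 : IntegrableOn
      (fun s : ℝ => Real.exp (K ^ 2) * (s ^ n * Real.exp (-(1/4) * s ^ 2))) (Set.Ioi 0) :=
    base.const_mul _
  apply base2.mono'
  · exact Measurable.aestronglyMeasurable (by fun_prop)
  · filter_upwards [ae_restrict_mem measurableSet_Ioi] with s hs
    have hs0 : (0:ℝ) < s := hs
    have hsn : (0:ℝ) ≤ s ^ n := by positivity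
    rw [Real.norm_eq_abs, abs_of_nonneg (by positivity)]
    have hexp : Real.exp (-s ^ 2 / 2) * Real.exp (s * K)
        ≤ Real.exp (K ^ 2) * Real.exp (-(1/4) * s ^ 2) := by
      rw [← Real.exp_add, ← Real.exp_add]
      apply Real.exp_le_exp.2
      nlinarith [sq_nonneg (s / 2 - K)]
    calc s ^ n * Real.exp (-s ^ 2 / 2) * Real.exp (s * K)
        = s ^ n * (Real.exp (-s ^ 2 / 2) * Real.exp (s * K)) := by ring
      _ ≤ s ^ n * (Real.exp (K ^ 2) * Real.exp (-(1/4) * s ^ 2)) :=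
          mul_le_mul_of_nonneg_left hexp hsn
      _ = Real.exp (K ^ 2) * (s ^ n * Real.exp (-(1/4) * s ^ 2)) := by ring

lemma integrand_bound {α β c : ℝ} (hβα : β ≤ α) (n : ℕ) {s : ℝ} (hs : 0 < s)
    {x K : ℝ} (hK : α - c * x ≤ K) :
    |Real.exp (-s ^ 2 / 2) * s ^ n / s *
        (Real.exp (s * (α - c * x)) - Real.exp (s * (β - c * x)))| ≤
      (α - β) * (s ^ n * Real.exp (-s ^ 2 / 2) * Real.exp (s * K)) := by
  have hd0 : 0 ≤ Real.exp (s * (α - c * x)) - Real.exp (s * (β - c * x)) :=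
    sub_nonneg.2 (Real.exp_le_exp.2 (by nlinarith))
  have hd : Real.exp (s * (α - c * x)) - Real.exp (s * (β - c * x))
      ≤ s * (α - β) * Real.exp (s * K) := by
    have h1 := exp_sub_exp_le (a := s * (α - c * x)) (b := s * (β - c * x)) (by nlinarith)
    have h2 : Real.exp (s * (α - c * x)) ≤ Real.exp (s * K) :=
      Real.exp_le_exp.2 (by nlinarith)
    calc Real.exp (s * (α - c * x)) - Real.exp (s * (β - c * x))
        ≤ (s * (α - c * x) - s * (β - c * x)) * Real.exp (s * (α - c * x)) := h1
      _ = s * (α - β) * Real.exp (s * (α - c * x)) := by ring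
      _ ≤ s * (α - β) * Real.exp (s * K) :=
          mul_le_mul_of_nonneg_left h2 (by nlinarith)
  have hpos : 0 ≤ Real.exp (-s ^ 2 / 2) * s ^ n / s := by positivity
  rw [abs_of_nonneg (mul_nonneg hpos hd0)]
  calc Real.exp (-s ^ 2 / 2) * s ^ n / s *
        (Real.exp (s * (α - c * x)) - Real.exp (s * (β - c * x)))
      ≤ Real.exp (-s ^ 2 / 2) * s ^ n / s * (s * (α - β) * Real.exp (s * K)) :=
        mul_le_mul_of_nonneg_left hd hpos
    _ = (α - β) * (s ^ n * Real.exp (-s ^ 2 / 2) * Real.exp (s * K)) := by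
        field_simp

lemma F_meas (α β c : ℝ) (n : ℕ) (x : ℝ) :
    AEStronglyMeasurable
      (fun s : ℝ => Real.exp (-s ^ 2 / 2) * s ^ n / s *
        (Real.exp (s * (α - c * x)) - Real.exp (s * (β - c * x))))
      (volume.restrict (Set.Ioi 0)) := by
  apply Measurable.aestronglyMeasurable
  fun_prop

lemma F_integrable {α β c : ℝ} (hβα : β ≤ α) (n : ℕ) (x : ℝ) :
    IntegrableOn
      (fun s : ℝ => Real.exp (-s ^ 2 / 2) * s ^ n / s *
        (Real.exp (s * (α - c * x)) - Real.exp (s * (β - c * x))))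
      (Set.Ioi 0) := by
  apply ((gauss_integrable n (α - c * x)).const_mul (α - β)).mono' (F_meas α β c n x)
  filter_upwards [ae_restrict_mem measurableSet_Ioi] with s hs
  exact integrand_bound hβα n hs le_rfl

lemma hasDerivAt_G {α β c : ℝ} (hβα : β ≤ α) (n : ℕ) (x₀ : ℝ) :
    HasDerivAt (G α β c n) (-c * G α β c (n + 1) x₀) x₀ := by
  set K : ℝ := α + |c| * (|x₀| + 1) with hKdef
  have hball : ∀ x ∈ Metric.ball x₀ (1:ℝ), α - c * x ≤ K := by
    intro x hx
    rw [Metric.mem_ball, Real.dist_eq] at hx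
    have h1 : |x| ≤ |x₀| + 1 := by
      have := abs_sub_abs_le_abs_sub x x₀
      linarith
    have h2 : -(c * x) ≤ |c| * |x| := by
      calc -(c * x) ≤ |c * x| := neg_le_abs _
        _ = |c| * |x| := abs_mul _ _
    have h3 : |c| * |x| ≤ |c| * (|x₀| + 1) :=
      mul_le_mul_of_nonneg_left h1 (abs_nonneg c)
    rw [hKdef]; linarith
  have key := hasDerivAt_integral_of_dominated_loc_of_deriv_le
    (μ := volume.restrict (Set.Ioi (0:ℝ))) (x₀ := x₀)
    (F := fun x s => Real.exp (-s ^ 2 / 2) * s ^ n / s *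
      (Real.exp (s * (α - c * x)) - Real.exp (s * (β - c * x))))
    (F' := fun x s => -c * (Real.exp (-s ^ 2 / 2) * s ^ (n + 1) / s *
      (Real.exp (s * (α - c * x)) - Real.exp (s * (β - c * x)))))
    (bound := fun s => |c| * ((α - β) * (s ^ (n + 1) * Real.exp (-s ^ 2 / 2) * Real.exp (s * K))))
    (Metric.ball_mem_nhds x₀ (by norm_num : (0:ℝ) < 1))
    (Filter.Eventually.of_forall fun x => F_meas α β c n x)
    (F_integrable hβα n x₀)
    ((F_meas α β c (n + 1) x₀).const_mul _)
    ?_ ?_ ?_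
  · have h2 := key.2
    have : (∫ s in Set.Ioi (0:ℝ), -c * (Real.exp (-s ^ 2 / 2) * s ^ (n + 1) / s *
        (Real.exp (s * (α - c * x₀)) - Real.exp (s * (β - c * x₀)))))
        = -c * G α β c (n + 1) x₀ := by
      rw [G, MeasureTheory.integral_const_mul]
    rw [this] at h2
    exact h2
  · -- bound
    filter_upwards [ae_restrict_mem measurableSet_Ioi] with s hs
    intro x hx
    rw [Real.norm_eq_abs, abs_mul, abs_neg]
    exact mul_le_mul_of_nonneg_left (integrand_bound hβα (n + 1) hs (hball x hx)) (abs_nonneg c)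
  · exact (((gauss_integrable (n + 1) K).const_mul (α - β)).const_mul |c|)
  · -- differentiability
    filter_upwards [ae_restrict_mem measurableSet_Ioi] with s hs
    intro x hx
    have hs0 : (0:ℝ) < s := hs
    have hA : HasDerivAt (fun x : ℝ => Real.exp (s * (α - c * x)))
        (s * -c * Real.exp (s * (α - c * x))) x := by
      have h1 : HasDerivAt (fun x : ℝ => s * (α - c * x)) (s * -c) x := by
        have : HasDerivAt (fun x : ℝ => α - c * x) (-c) x := by
          simpa using ((hasDerivAt_id x).const_mul c).const_sub α
        simpa using this.const_mul s
      simpa [mul_comm] using h1.exp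
    have hB : HasDerivAt (fun x : ℝ => Real.exp (s * (β - c * x)))
        (s * -c * Real.exp (s * (β - c * x))) x := by
      have h1 : HasDerivAt (fun x : ℝ => s * (β - c * x)) (s * -c) x := by
        have : HasDerivAt (fun x : ℝ => β - c * x) (-c) x := by
          simpa using ((hasDerivAt_id x).const_mul c).const_sub β
        simpa using this.const_mul s
      simpa [mul_comm] using h1.exp
    have h := ((hA.sub hB).const_mul (Real.exp (-s ^ 2 / 2) * s ^ n / s))
    refine h.congr_deriv ?_
    have hsne : s ≠ 0 := hs0.ne'
    ring

lemma deriv_G {α β c : ℝ} (hβα : β ≤ α) (n : ℕ) :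
    deriv (G α β c n) = fun x => -c * G α β c (n + 1) x :=
  funext fun x => (hasDerivAt_G hβα n x).deriv

lemma iteratedDeriv_G {α β c : ℝ} (hβα : β ≤ α) (k n : ℕ) :
    iteratedDeriv k (G α β c n) = fun x => (-c) ^ k * G α β c (n + k) x := by
  induction k with
  | zero => simp [iteratedDeriv_zero]
  | succ m ih =>
    rw [iteratedDeriv_succ, ih]
    funext x
    have h : HasDerivAt (fun x => (-c) ^ m * G α β c (n + m) x)
        ((-c) ^ m * (-c * G α β c (n + m + 1) x)) x :=
      (hasDerivAt_G hβα (n + m) x).const_mul ((-c) ^ m)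
    rw [h.deriv]
    rw [show n + m + 1 = n + (m + 1) by ring]
    ring

lemma contDiff_G {α β c : ℝ} (hβα : β ≤ α) (m : ℕ) (n : ℕ) :
    ContDiff ℝ (m : ℕ) (G α β c n) := by
  induction m generalizing n with
  | zero =>
    have hdiff : Differentiable ℝ (G α β c n) := fun x => (hasDerivAt_G hβα n x).differentiableAt
    rw [show ((0:ℕ) : WithTop ℕ∞) = 0 by norm_cast, contDiff_zero]
    exact hdiff.continuous
  | succ m ih =>
    have : ContDiff ℝ ((m : WithTop ℕ∞) + 1) (G α β c n) := by
      refine contDiff_succ_iff_deriv.2 ⟨fun x => (hasDerivAt_G hβα n x).differentiableAt,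
        ?_, ?_⟩
      · intro h; simp at h
      · rw [deriv_G hβα]
        exact contDiff_const.mul (ih (n + 1))
    exact_mod_cast this

end I2Aux
open MeasureTheory

/-- The `k`-th partial derivative of `I2` with respect to `N_E` exists and equals
`(−1)^k·(b_EI/√a_I)^k · ∫₀^∞ e^{−s²/2}·s^{k−1}·(e^{s·w̃_F} − e^{s·w̃_R}) ds`. -/
theorem I2_iteratedDeriv_NE (VR VF aI bEE bEI bII νext : ℝ)
    (hV : VR < VF) (haI : 0 < aI)
    (hEE : 0 ≤ bEE) (hEI : 0 ≤ bEI) (hII : 0 ≤ bII) (hν : 0 ≤ νext)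
    (k : ℕ) (hk : 1 ≤ k) (NE NI : ℝ) :
    ContDiff ℝ (k : ℕ∞) (fun x => I2 VR VF aI bEE bEI bII νext x NI) ∧
    iteratedDeriv k (fun x => I2 VR VF aI bEE bEI bII νext x NI) NE =
      (-1) ^ k * (bEI / Real.sqrt aI) ^ k *
        ∫ s in Set.Ioi (0:ℝ),
          Real.exp (-s ^ 2 / 2) * s ^ (k - 1) *
            (Real.exp (s * ((VF - (bEI * NE - bII * NI + (bEI - bEE) * νext)) / Real.sqrt aI)) -
             Real.exp (s * ((VR - (bEI * NE - bII * NI + (bEI - bEE) * νext)) / Real.sqrt aI))) := by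
  have hq : (0:ℝ) < Real.sqrt aI := Real.sqrt_pos.mpr haI
  have hq0 : Real.sqrt aI ≠ 0 := hq.ne'
  set A : ℝ := (VF + bII * NI - (bEI - bEE) * νext) / Real.sqrt aI with hA
  set B : ℝ := (VR + bII * NI - (bEI - bEE) * νext) / Real.sqrt aI with hB
  set c : ℝ := bEI / Real.sqrt aI with hc
  have hβα : B ≤ A := by
    rw [hA, hB]
    exact (div_le_div_iff_of_pos_right hq).2 (by linarith)
  have e1 : ∀ x s : ℝ,
      s * ((VF - (bEI * x - bII * NI + (bEI - bEE) * νext)) / Real.sqrt aI)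
        = s * (A - c * x) := by
    intro x s
    rw [hA, hc]
    field_simp
    ring
  have e2 : ∀ x s : ℝ,
      s * ((VR - (bEI * x - bII * NI + (bEI - bEE) * νext)) / Real.sqrt aI)
        = s * (B - c * x) := by
    intro x s
    rw [hB, hc]
    field_simp
    ring
  have hI2G : (fun x => I2 VR VF aI bEE bEI bII νext x NI) = I2Aux.G A B c 0 := by
    funext x
    rw [I2, I2Aux.G]
    refine integral_congr_ae (Filter.Eventually.of_forall fun s => ?_)
    simp only [pow_zero, mul_one]
    rw [e1 x s, e2 x s]
  constructor
  · rw [hI2G]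
    exact_mod_cast I2Aux.contDiff_G hβα k 0
  · rw [hI2G, I2Aux.iteratedDeriv_G hβα k 0]
    show (-c) ^ k * I2Aux.G A B c (0 + k) NE = _
    rw [zero_add, show ((-c : ℝ)) ^ k = (-1 : ℝ) ^ k * c ^ k from neg_pow c k]
    congr 1
    simp only [I2Aux.G]
    obtain ⟨m, rfl⟩ : ∃ m, k = m + 1 := ⟨k - 1, (Nat.succ_pred_eq_of_pos hk).symm⟩
    refine setIntegral_congr_fun measurableSet_Ioi fun s hs => ?_
    have hs0 : (0:ℝ) < s := hs
    have hsne : s ≠ 0 := hs0.ne'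
    simp only [e1, e2, Nat.add_sub_cancel]
    field_simp [pow_succ]
    ring
end

section
/- Assume b_EI > 0. Then N_I(N_E) → ∞ as N_E → ∞. -/
open MeasureTheory

open Real Set

lemma exp_sub_exp_le' {a b : ℝ} (hba : b ≤ a) : exp a - exp b ≤ (a - b) * exp a := by
  have h := Real.add_one_le_exp (b - a)
  have h1 : 1 - exp (b - a) ≤ a - b := by linarith
  have h2 : exp a - exp b = (1 - exp (b - a)) * exp a := by
    rw [sub_mul, one_mul, ← Real.exp_add]; ring_nf
  rw [h2]
  exact mul_le_mul_of_nonneg_right h1 (exp_pos a).le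

lemma key_integral_bound {wR wF : ℝ} (hRF : wR < wF) (hF : wF < 0) :
    (∫ s in Set.Ioi (0:ℝ),
      exp (-s ^ 2 / 2) / s * (exp (s * wF) - exp (s * wR))) ≤ (wF - wR) / (-wF) := by
  have hnegwF : 0 < -wF := by linarith
  have hint : IntegrableOn (fun s : ℝ => (wF - wR) * exp (s * wF)) (Ioi 0) := by
    have := (exp_neg_integrableOn_Ioi 0 hnegwF).const_mul (wF - wR)
    refine this.congr (Filter.EventuallyEq.of_eq ?_)
    funext s; ring_nf
  have hmono : (∫ s in Set.Ioi (0:ℝ),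
      exp (-s ^ 2 / 2) / s * (exp (s * wF) - exp (s * wR)))
      ≤ ∫ s in Set.Ioi (0:ℝ), (wF - wR) * exp (s * wF) := by
    apply integral_mono_of_nonneg ?_ hint ?_
    · filter_upwards [ae_restrict_mem measurableSet_Ioi] with s hs
      have hs' : (0:ℝ) < s := hs
      have h1 : 0 ≤ exp (-s ^ 2 / 2) / s := by positivity
      have h2 : exp (s * wR) ≤ exp (s * wF) :=
        exp_le_exp.2 (mul_le_mul_of_nonneg_left hRF.le hs'.le)
      exact mul_nonneg h1 (by linarith)
    · filter_upwards [ae_restrict_mem measurableSet_Ioi] with s hs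
      have hs' : (0:ℝ) < s := hs
      have h2 : exp (s * wR) ≤ exp (s * wF) :=
        exp_le_exp.2 (mul_le_mul_of_nonneg_left hRF.le hs'.le)
      have he1 : exp (-s ^ 2 / 2) ≤ 1 := by
        rw [Real.exp_le_one_iff]; nlinarith
      have hb1 : exp (-s ^ 2 / 2) / s * (exp (s * wF) - exp (s * wR))
          ≤ 1 / s * (exp (s * wF) - exp (s * wR)) := by
        gcongr <;> linarith
      have hb2 : exp (s * wF) - exp (s * wR) ≤ s * (wF - wR) * exp (s * wF) := by
        have := exp_sub_exp_le' (a := s * wF) (b := s * wR)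
          (mul_le_mul_of_nonneg_left hRF.le hs'.le)
        calc exp (s * wF) - exp (s * wR) ≤ (s * wF - s * wR) * exp (s * wF) := this
          _ = s * (wF - wR) * exp (s * wF) := by ring
      calc exp (-s ^ 2 / 2) / s * (exp (s * wF) - exp (s * wR))
          ≤ 1 / s * (exp (s * wF) - exp (s * wR)) := hb1
        _ ≤ 1 / s * (s * (wF - wR) * exp (s * wF)) := by
            apply mul_le_mul_of_nonneg_left hb2 (by positivity)
        _ = (wF - wR) * exp (s * wF) := by field_simp
  have hval : (∫ s in Set.Ioi (0:ℝ), (wF - wR) * exp (s * wF)) = (wF - wR) / (-wF) := by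
    rw [MeasureTheory.integral_const_mul]
    have h1 : (∫ s in Set.Ioi (0:ℝ), exp (s * wF))
        = ∫ s in Set.Ioi (0:ℝ), exp (-((-wF) * s)) := by
      congr 1; ext s; ring_nf
    rw [h1, integral_comp_mul_left_Ioi (fun x => exp (-x)) 0 hnegwF]
    rw [mul_zero, integral_exp_neg_Ioi, neg_zero, Real.exp_zero, smul_eq_mul, mul_one]
    rw [div_eq_mul_inv]
  linarith [hmono, hval.le, hval.ge]

/-- If `b_EI > 0`, then `N_I(N_E) → ∞` as `N_E → ∞`, where `N_I(N_E)` is the unique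
positive solution of `N_I · I2(N_E, N_I) = 1`. -/
theorem NIfun_tendsto_atTop (VR VF aI bEE bEI bII νext : ℝ)
    (hV : VR < VF) (haI : 0 < aI)
    (hEE : 0 ≤ bEE) (hEI : 0 < bEI) (hII : 0 ≤ bII) (hν : 0 ≤ νext)
    (NIfun : ℝ → ℝ)
    (hNI : ∀ NE : ℝ, 0 ≤ NE →
      0 < NIfun NE ∧ NIfun NE * I2 VR VF aI bEE bEI bII νext NE (NIfun NE) = 1) :
    Filter.Tendsto NIfun Filter.atTop Filter.atTop := by
  have hr : 0 < Real.sqrt aI := Real.sqrt_pos.2 haI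
  rw [Filter.tendsto_atTop]
  intro M
  have hM'pos : (0:ℝ) < max M 1 := lt_of_lt_of_le one_pos (le_max_right _ _)
  set M' := max M 1 with hM'
  have hMM' : M ≤ M' := le_max_left _ _
  set Δ := (VF - VR) / Real.sqrt aI with hΔ
  have hΔpos : 0 < Δ := div_pos (by linarith) hr
  set c := (bEI - bEE) * νext with hc
  set T := (Real.sqrt aI * (Δ * M') + VF + bII * M' - c + 1) / bEI with hT
  filter_upwards [Filter.eventually_ge_atTop (max 0 T)] with NE hNE
  have hNE0 : (0:ℝ) ≤ NE := le_trans (le_max_left _ _) hNE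
  have hNET : T ≤ NE := le_trans (le_max_right _ _) hNE
  obtain ⟨hpos, heq⟩ := hNI NE hNE0
  by_contra hlt
  push_neg at hlt
  have hNIM' : NIfun NE < M' := lt_of_lt_of_le hlt hMM'
  have hbT : Real.sqrt aI * (Δ * M') + VF + bII * M' - c + 1 ≤ bEI * NE := by
    rw [hT, div_le_iff₀ hEI] at hNET
    linarith [mul_comm NE bEI]
  set NI := NIfun NE with hNIdef
  set V0 := bEI * NE - bII * NI + c with hV0
  have hV0big : VF + Real.sqrt aI * (Δ * M') + 1 ≤ V0 := by
    have h1 : bII * NI ≤ bII * M' := mul_le_mul_of_nonneg_left hNIM'.le hII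
    rw [hV0]; linarith
  set wF := (VF - V0) / Real.sqrt aI with hwF
  set wR := (VR - V0) / Real.sqrt aI with hwR
  have hwRF : wR < wF := by
    rw [hwF, hwR, div_lt_div_iff_of_pos_right hr]; linarith
  have hwFneg : wF < 0 :=
    div_neg_of_neg_of_pos (by nlinarith [mul_pos hr (mul_pos hΔpos hM'pos)]) hr
  have hwFbig : Δ * M' < -wF := by
    rw [hwF, ← neg_div, lt_div_iff₀ hr]
    nlinarith
  have hdiff : wF - wR = Δ := by
    rw [hwF, hwR, div_sub_div_same, hΔ]; ring_nf
  have hI2eq : I2 VR VF aI bEE bEI bII νext NE NI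
      = ∫ s in Set.Ioi (0:ℝ),
          Real.exp (-s ^ 2 / 2) / s * (Real.exp (s * wF) - Real.exp (s * wR)) := rfl
  have hI2le : I2 VR VF aI bEE bEI bII νext NE NI ≤ Δ / (-wF) := by
    rw [hI2eq, ← hdiff]
    exact key_integral_bound hwRF hwFneg
  have h1 : (1:ℝ) ≤ NI * (Δ / (-wF)) := by
    calc (1:ℝ) = NI * I2 VR VF aI bEE bEI bII νext NE NI := heq.symm
      _ ≤ NI * (Δ / (-wF)) := mul_le_mul_of_nonneg_left hI2le hpos.le
  have hnegwF : 0 < -wF := by linarith [hwFbig, mul_pos hΔpos hM'pos]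
  have h2 : -wF ≤ NI * Δ := by
    rw [← mul_div_assoc] at h1
    exact (one_le_div hnegwF).1 h1
  nlinarith [h2, hwFbig, hΔpos, hNIM']
end
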